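/- Squared-kernel second moment asymptotic (constant C₃): as h → 0⁺, the D×D-matrix-valued integral h^{-(d+2)} ∫_{B̄(0,r)} K((φ(z) − x)/h)² (φ(z) − x)(φ(z) − x)^T v(φ(z)) f(z) dz converges entrywise to f(0) · v(x) · ∫_{ℝ^d} K(L u)² (L u)(L u)^T du. -/

import Mathlib

open MeasureTheory Metric Filter

open Topology Module

/-! Substituting `z = h • u` turns the normalised integral into
`∫ 1_{B̄(0,r)}(h u) ψ(h⁻¹(φ(h u) - φ 0)) w(h u) du` with `ψ y = K(y)² y_a y_b` and `w = (v ∘ φ) f`;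
the two extra powers of `h` are absorbed because `K(y/h)² y_a y_b = h² ψ(y/h)`. The integrand
tends pointwise to `ψ(L u) w(0)`, since `h⁻¹(φ(h u) - φ 0) → L u`, and the lower bi-Lipschitz
bound keeps its support inside `‖u‖ ≤ R / c`, where `R` bounds the support of `ψ`; dominated
convergence concludes. -/

section Rescaling

variable {E F : Type*} [NormedAddCommGroup E] [NormedSpace ℝ E]
  [NormedAddCommGroup F] [NormedSpace ℝ F]

theorem HasFDerivAt.tendsto_inv_smul_sub {φ : E → F} {L : E →L[ℝ] F} (hφ : HasFDerivAt φ L 0)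
    (u : E) : Tendsto (fun h : ℝ => h⁻¹ • (φ (h • u) - φ 0)) (𝓝[≠] 0) (𝓝 (L u)) := by
  have hline : HasDerivAt (fun t : ℝ => φ (t • u)) (L u) 0 := by
    have hφ' : HasFDerivAt φ L ((0 : ℝ) • u) := by rwa [zero_smul]
    have hsmul : HasDerivAt (fun t : ℝ => t • u) u 0 := by
      simpa using (hasDerivAt_id (0 : ℝ)).smul_const u
    exact hφ'.comp_hasDerivAt 0 hsmul
  refine (hasDerivAt_iff_tendsto_slope.1 hline).congr fun h => ?_
  simp [slope_def_module]

variable {ψ : F → ℝ} {φ : E → F} {w : E → ℝ} {r : ℝ}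

theorem tendsto_indicator_rescaled_integrand {L : E →L[ℝ] F} (hψ : Continuous ψ)
    (hφ : HasFDerivAt φ L 0) (hw : ContinuousAt w 0) (hr : 0 < r) (u : E) :
    Tendsto (fun h : ℝ => (closedBall (0 : E) r).indicator
        (fun z => ψ (h⁻¹ • (φ z - φ 0)) * w z) (h • u)) (𝓝[>] 0) (𝓝 (ψ (L u) * w 0)) := by
  have hsmul : Tendsto (fun h : ℝ => h • u) (𝓝[>] 0) (𝓝 0) := by
    exact ((continuous_id.smul continuous_const).tendsto' 0 0 (zero_smul ℝ u)).mono_left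
      nhdsWithin_le_nhds
  have hslope := (hφ.tendsto_inv_smul_sub u).mono_left (nhdsWithin_mono 0 fun _ ht => ne_of_gt ht)
  refine (((hψ.tendsto _).comp hslope).mul (hw.tendsto.comp hsmul)).congr' ?_
  filter_upwards [hsmul.eventually (closedBall_mem_nhds (0 : E) hr)] with h
    (hmem : h • u ∈ closedBall (0 : E) r)
  rw [Set.indicator_of_mem hmem]
  rfl

theorem norm_indicator_rescaled_integrand_le {c R Mψ Mw h : ℝ}
    (hψ_bdd : ∀ y, ‖ψ y‖ ≤ Mψ) (hψ_supp : Function.support ψ ⊆ closedBall 0 R)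
    (hw_bdd : ∀ z, ‖w z‖ ≤ Mw) (hc : 0 < c)
    (hlow : ∀ z ∈ closedBall (0 : E) r, c * ‖z‖ ≤ ‖φ z - φ 0‖) (hh : 0 < h) (u : E) :
    ‖(closedBall (0 : E) r).indicator (fun z => ψ (h⁻¹ • (φ z - φ 0)) * w z) (h • u)‖ ≤
      (closedBall (0 : E) (R / c)).indicator (fun _ => Mψ * Mw) u := by
  have hM : 0 ≤ Mψ * Mw :=
    mul_nonneg ((norm_nonneg _).trans (hψ_bdd 0)) ((norm_nonneg _).trans (hw_bdd 0))
  by_cases hz : h • u ∈ closedBall (0 : E) r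
  swap
  · rw [Set.indicator_of_notMem hz, norm_zero]
    exact Set.indicator_nonneg (fun _ _ => hM) u
  rw [Set.indicator_of_mem hz, norm_mul]
  by_cases hu : u ∈ closedBall (0 : E) (R / c)
  · rw [Set.indicator_of_mem hu]
    exact mul_le_mul (hψ_bdd _) (hw_bdd _) (norm_nonneg _) ((norm_nonneg _).trans (hψ_bdd 0))
  suffices hψ0 : ψ (h⁻¹ • (φ (h • u) - φ 0)) = 0 by
    rw [Set.indicator_of_notMem hu, hψ0, norm_zero, zero_mul]
  refine Function.notMem_support.1 fun hy => ?_
  have hRu : R < c * ‖u‖ := by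
    rw [mem_closedBall_zero_iff, not_le, div_lt_iff₀ hc] at hu
    linarith
  have hscaled : c * ‖u‖ ≤ h⁻¹ * ‖φ (h • u) - φ 0‖ := by
    have hφu := hlow _ hz
    rw [norm_smul, Real.norm_of_nonneg hh.le] at hφu
    rw [le_inv_mul_iff₀ hh]
    linarith
  have hyR := mem_closedBall_zero_iff.1 (hψ_supp hy)
  rw [norm_smul, Real.norm_of_nonneg (inv_nonneg.2 hh.le)] at hyR
  linarith

theorem tendsto_setIntegral_rescaled_div_pow_finrank [FiniteDimensional ℝ E] [MeasurableSpace E]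
    [BorelSpace E] (μ : Measure E) [μ.IsAddHaarMeasure] {L : E →L[ℝ] F} {c : ℝ}
    (hψ : Continuous ψ) (hψ_supp : HasCompactSupport ψ) (hφ : Continuous φ)
    (hφL : HasFDerivAt φ L 0) (hc : 0 < c) (hr : 0 < r)
    (hlow : ∀ z ∈ closedBall (0 : E) r, c * ‖z‖ ≤ ‖φ z - φ 0‖)
    (hw_meas : Measurable w) (hw : ContinuousAt w 0) (hw_bdd : ∃ M, ∀ z, ‖w z‖ ≤ M) :
    Tendsto (fun h : ℝ => (∫ z in closedBall 0 r, ψ (h⁻¹ • (φ z - φ 0)) * w z ∂μ) /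
        h ^ finrank ℝ E) (𝓝[>] 0) (𝓝 ((∫ u, ψ (L u) ∂μ) * w 0)) := by
  obtain ⟨Mw, hMw⟩ := hw_bdd
  obtain ⟨Mψ, hMψ⟩ := hψ_supp.exists_bound_of_continuous hψ
  obtain ⟨R, hR⟩ := hψ_supp.isBounded.subset_closedBall 0
  set S := closedBall (0 : E) r
  set g : ℝ → E → ℝ := fun h z => ψ (h⁻¹ • (φ z - φ 0)) * w z
  have hchange : ∀ h > (0 : ℝ), ∫ u, S.indicator (g h) (h • u) ∂μ =
      (∫ z in S, g h z ∂μ) / h ^ finrank ℝ E := fun h hh => by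
    rw [Measure.integral_comp_smul_of_nonneg μ _ h (hR := hh.le),
      integral_indicator measurableSet_closedBall, smul_eq_mul, inv_mul_eq_div]
  have hmeas : ∀ h : ℝ, AEStronglyMeasurable (fun u => S.indicator (g h) (h • u)) μ := fun h =>
    (((((hψ.comp (by fun_prop)).measurable).mul hw_meas).indicator
      measurableSet_closedBall).comp (measurable_const_smul h)).aestronglyMeasurable
  have hdom := tendsto_integral_filter_of_dominated_convergence (l := 𝓝[>] (0 : ℝ))
    ((closedBall (0 : E) (R / c)).indicator fun _ => Mψ * Mw) (.of_forall hmeas)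
    (eventually_mem_nhdsWithin.mono fun h hh => .of_forall
      (norm_indicator_rescaled_integrand_le hMψ ((subset_tsupport ψ).trans hR) hMw hc hlow hh))
    ((integrable_indicator_iff measurableSet_closedBall).2
      (integrableOn_const measure_closedBall_lt_top.ne))
    (ae_of_all _ (tendsto_indicator_rescaled_integrand hψ hφL hw hr))
  rw [integral_mul_const] at hdom
  exact hdom.congr' (eventually_mem_nhdsWithin.mono hchange)

end Rescaling

theorem squared_kernel_second_moment_C3_general
    (d D : ℕ) (r : ℝ) (hr : 0 < r)
    (φ : EuclideanSpace ℝ (Fin d) → EuclideanSpace ℝ (Fin D))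
    (hφ : ContDiff ℝ 1 φ)
    (c C : ℝ) (hc : 0 < c)
    (hbil : ∀ z ∈ closedBall (0 : EuclideanSpace ℝ (Fin d)) r,
      ∀ z' ∈ closedBall (0 : EuclideanSpace ℝ (Fin d)) r,
        c * ‖z - z'‖ ≤ ‖φ z - φ z'‖ ∧ ‖φ z - φ z'‖ ≤ C * ‖z - z'‖)
    (f : EuclideanSpace ℝ (Fin d) → ℝ)
    (hf_meas : Measurable f)
    (hf_nonneg : ∀ z, 0 ≤ f z)
    (hf_bdd : ∃ M : ℝ, ∀ z, f z ≤ M)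
    (hf_cont : ContinuousAt f 0)
    (K : EuclideanSpace ℝ (Fin D) → ℝ)
    (hK_cont : Continuous K)
    (hK_supp : HasCompactSupport K)
    (v : EuclideanSpace ℝ (Fin D) → ℝ)
    (hv_nonneg : ∀ y, 0 ≤ v y)
    (hv_bdd : ∃ M : ℝ, ∀ y, v y ≤ M)
    (hv_meas : Measurable v)
    (hv_cont : ContinuousAt v (φ 0)) :
    ∀ a b : Fin D,
      Tendsto
        (fun h : ℝ =>
          (∫ z in closedBall (0 : EuclideanSpace ℝ (Fin d)) r,
              K (h⁻¹ • (φ z - φ 0)) ^ 2 * ((φ z - φ 0) a * (φ z - φ 0) b) *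
                v (φ z) * f z) / h ^ (d + 2))
        (nhdsWithin 0 (Set.Ioi 0))
        (nhds (f 0 * v (φ 0) *
          ∫ u, K (fderiv ℝ φ 0 u) ^ 2 *
            (fderiv ℝ φ 0 u a * fderiv ℝ φ 0 u b))) := by
  intro a b
  obtain ⟨Mf, hMf⟩ := hf_bdd
  obtain ⟨Mv, hMv⟩ := hv_bdd
  have hlow : ∀ z ∈ closedBall (0 : EuclideanSpace ℝ (Fin d)) r, c * ‖z‖ ≤ ‖φ z - φ 0‖ :=
    fun z hz => by simpa using (hbil z hz 0 (mem_closedBall_self hr.le)).1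
  have hw_bdd : ∃ M, ∀ z, ‖v (φ z) * f z‖ ≤ M := ⟨Mv * Mf, fun z => by
    rw [norm_mul, Real.norm_of_nonneg (hv_nonneg _), Real.norm_of_nonneg (hf_nonneg _)]
    exact mul_le_mul (hMv _) (hMf z) (hf_nonneg z) ((hv_nonneg _).trans (hMv (φ z)))⟩
  have hψ_supp : HasCompactSupport fun y : EuclideanSpace ℝ (Fin D) => K y ^ 2 * (y a * y b) :=
    (hK_supp.comp_left (g := fun t : ℝ => t ^ 2) (zero_pow two_ne_zero)).mul_right
  have key := tendsto_setIntegral_rescaled_div_pow_finrank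
    (ψ := fun y : EuclideanSpace ℝ (Fin D) => K y ^ 2 * (y a * y b))
    (w := fun z => v (φ z) * f z) volume (by fun_prop)
    hψ_supp hφ.continuous (hφ.differentiable one_ne_zero 0).hasFDerivAt
    hc hr hlow ((hv_meas.comp hφ.continuous.measurable).mul hf_meas)
    ((hv_cont.comp hφ.continuous.continuousAt).mul hf_cont) hw_bdd
  rw [finrank_euclideanSpace_fin, mul_comm, mul_comm (v _)] at key
  refine key.congr' ?_
  filter_upwards [self_mem_nhdsWithin] with h (hh : 0 < h)
  have hscale : ∀ z, K (h⁻¹ • (φ z - φ 0)) ^ 2 * ((φ z - φ 0) a * (φ z - φ 0) b) * v (φ z) * f z =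
      h ^ 2 * (K (h⁻¹ • (φ z - φ 0)) ^ 2 *
        ((h⁻¹ • (φ z - φ 0)) a * (h⁻¹ • (φ z - φ 0)) b) * (v (φ z) * f z)) := fun z => by
    simp only [PiLp.smul_apply, smul_eq_mul]
    field_simp
  simp_rw [hscale, integral_const_mul, pow_add]
  field_simp

/-- Squared-kernel second moment asymptotic (constant C₃): as `h → 0⁺`, entrywise,
`h^(-(d+2)) ∫_{B̄(0,r)} K((φ z − x)/h)² (φ z − x)(φ z − x)ᵀ v(φ z) f z dz
  → f 0 · v x · ∫_{ℝ^d} K(L u)² (L u)(L u)ᵀ du`. -/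
theorem squared_kernel_second_moment_C3
    (d D : ℕ) (hd : 0 < d) (hdD : d ≤ D) (r : ℝ) (hr : 0 < r)
    (φ : EuclideanSpace ℝ (Fin d) → EuclideanSpace ℝ (Fin D))
    (hφ : ContDiff ℝ 1 φ)
    (c C : ℝ) (hc : 0 < c) (hcC : c ≤ C)
    (hbil : ∀ z ∈ closedBall (0 : EuclideanSpace ℝ (Fin d)) r,
      ∀ z' ∈ closedBall (0 : EuclideanSpace ℝ (Fin d)) r,
        c * ‖z - z'‖ ≤ ‖φ z - φ z'‖ ∧ ‖φ z - φ z'‖ ≤ C * ‖z - z'‖)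
    (hL : Function.Injective (fderiv ℝ φ 0))
    (f : EuclideanSpace ℝ (Fin d) → ℝ)
    (hf_meas : Measurable f)
    (hf_nonneg : ∀ z, 0 ≤ f z)
    (hf_supp : ∀ z ∉ closedBall (0 : EuclideanSpace ℝ (Fin d)) r, f z = 0)
    (hf_bdd : ∃ M : ℝ, ∀ z, f z ≤ M)
    (hf_prob : ∫ z, f z = 1)
    (hf_cont : ContinuousAt f 0) (hf_pos : 0 < f 0)
    (K : EuclideanSpace ℝ (Fin D) → ℝ)
    (hK_nonneg : ∀ u, 0 ≤ K u) (hK_cont : Continuous K)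
    (hK_supp : HasCompactSupport K)
    (v : EuclideanSpace ℝ (Fin D) → ℝ)
    (hv_nonneg : ∀ y, 0 ≤ v y)
    (hv_bdd : ∃ M : ℝ, ∀ y, v y ≤ M)
    (hv_meas : Measurable v)
    (hv_cont : ContinuousAt v (φ 0)) :
    ∀ a b : Fin D,
      Tendsto
        (fun h : ℝ =>
          (∫ z in closedBall (0 : EuclideanSpace ℝ (Fin d)) r,
              K (h⁻¹ • (φ z - φ 0)) ^ 2 * ((φ z - φ 0) a * (φ z - φ 0) b) *
                v (φ z) * f z) / h ^ (d + 2))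
        (nhdsWithin 0 (Set.Ioi 0))
        (nhds (f 0 * v (φ 0) *
          ∫ u, K (fderiv ℝ φ 0 u) ^ 2 *
            (fderiv ℝ φ 0 u a * fderiv ℝ φ 0 u b))) :=
  squared_kernel_second_moment_C3_general d D r hr φ hφ c C hc hbil f hf_meas hf_nonneg hf_bdd
    hf_cont K hK_cont hK_supp v hv_nonneg hv_bdd hv_meas hv_cont
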